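/- For every matrix A in SU(1,1;ℂ), the real 3×3 matrix η(A) satisfies η(A)ᵀ · diag(1,1,−1) · η(A) = diag(1,1,−1), and its (3,3)-entry equals 1 + 2|b|² ≥ 1; that is, η(A) lies in SO⁺(2,1). -/

import Mathlib

open Matrix

noncomputable section

/-- The matrix `J = diag(1, -1)` in `M₂(ℂ)`. -/
def Jc : Matrix (Fin 2) (Fin 2) ℂ := !![1, 0; 0, -1]

/-- `SU(1,1;ℂ) = {A ∈ M₂(ℂ) : A*JA = J and det A = 1}`. -/
def SU11C : Set (Matrix (Fin 2) (Fin 2) ℂ) := {A | Aᴴ * Jc * A = Jc ∧ A.det = 1}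

/-- The double covering map `η : SU(1,1;ℂ) → SO⁺(2,1)`, written with
`a = A₀₀ = a₁ + a₂ i` and `b = A₀₁ = b₁ + b₂ i`. -/
def eta (A : Matrix (Fin 2) (Fin 2) ℂ) : Matrix (Fin 3) (Fin 3) ℝ :=
  let a1 := (A 0 0).re; let a2 := (A 0 0).im
  let b1 := (A 0 1).re; let b2 := (A 0 1).im
  !![1 - 2*a2^2 + 2*b1^2, -2*a1*a2 + 2*b1*b2, 2*a1*b1 - 2*a2*b2;
     2*a1*a2 + 2*b1*b2, 1 - 2*a2^2 + 2*b2^2, 2*a1*b2 + 2*a2*b1;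
     2*a1*b1 + 2*a2*b2, 2*a1*b2 - 2*a2*b1, 1 + 2*b1^2 + 2*b2^2]

/-! Every `A ∈ SU(1,1)` has the form `[[a, b], [b̄, ā]]` with `|a|² - |b|² = 1`: the defining
relation says that `J Aᴴ J` is a left inverse of `A`, while `det A = 1` makes the adjugate
`[[d, -b], [-c, a]]` the inverse, and comparing the two gives `d = ā`, `c = b̄`. The entries of
`η(A)ᵀ diag(1,1,-1) η(A) - diag(1,1,-1)` are polynomial multiples of `|a|² - |b|² - 1`. -/

open ComplexConjugate

namespace SU11C

variable {A : Matrix (Fin 2) (Fin 2) ℂ}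

theorem inv_eq_Jc_mul_conjTranspose_mul_Jc (hA : A ∈ SU11C) : A⁻¹ = Jc * Aᴴ * Jc := by
  apply inv_eq_left_inv
  have hJc : Jc * Jc = 1 := by simp [Jc, one_fin_two]
  rw [Matrix.mul_assoc (Jc * Aᴴ), Matrix.mul_assoc Jc, ← Matrix.mul_assoc Aᴴ, hA.1, hJc]

theorem apply_one_eq_conj (hA : A ∈ SU11C) :
    A 1 0 = conj (A 0 1) ∧ A 1 1 = conj (A 0 0) := by
  have hinv := inv_eq_Jc_mul_conjTranspose_mul_Jc hA
  rw [Matrix.inv_def, hA.2, Ring.inverse_one, one_smul, adjugate_fin_two] at hinv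
  have h01 := congrFun (congrFun hinv 0) 1
  have h00 := congrFun (congrFun hinv 0) 0
  simp only [Jc, of_apply, cons_val', cons_val_one, cons_val_zero, cons_val_fin_one, cons_mul,
    empty_mul, vecMul, dotProduct, conjTranspose_apply, RCLike.star_def, Fin.sum_univ_two, one_mul,
    zero_mul, add_zero, zero_add, mul_zero, mul_one, mul_neg, neg_inj] at h01 h00
  exact ⟨by rw [h01, Complex.conj_conj], h00⟩

theorem normSq_sub_normSq (hA : A ∈ SU11C) :
    Complex.normSq (A 0 0) - Complex.normSq (A 0 1) = 1 := by
  obtain ⟨hc, hd⟩ := apply_one_eq_conj hA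
  have hdet := hA.2
  rw [det_fin_two, hc, hd, Complex.mul_conj, Complex.mul_conj] at hdet
  exact_mod_cast hdet

end SU11C

theorem eta_transpose_mul_diagonal_mul_eta {A : Matrix (Fin 2) (Fin 2) ℂ}
    (h : Complex.normSq (A 0 0) - Complex.normSq (A 0 1) = 1) :
    (eta A)ᵀ * diagonal ![1, 1, -1] * eta A = diagonal ![1, 1, -1] := by
  rw [Complex.normSq_apply, Complex.normSq_apply] at h
  ext i j
  fin_cases i <;> fin_cases j <;>
    simp [eta, Matrix.mul_apply, Fin.sum_univ_succ, diagonal] <;> grind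

theorem eta_two_two (A : Matrix (Fin 2) (Fin 2) ℂ) : eta A 2 2 = 1 + 2 * ‖A 0 1‖ ^ 2 := by
  rw [Complex.sq_norm, Complex.normSq_apply]
  simp only [eta, of_apply, cons_val]
  ring

theorem stmt15 (A : Matrix (Fin 2) (Fin 2) ℂ) (hA : A ∈ SU11C) :
    (eta A)ᵀ * Matrix.diagonal ![1, 1, -1] * eta A = Matrix.diagonal ![1, 1, -1] ∧
    eta A 2 2 = 1 + 2 * ‖A 0 1‖ ^ 2 ∧
    1 ≤ eta A 2 2 := by
  refine ⟨eta_transpose_mul_diagonal_mul_eta (SU11C.normSq_sub_normSq hA), eta_two_two A, ?_⟩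
  rw [eta_two_two]
  exact le_add_of_nonneg_right (by positivity)
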